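/- arXiv:1112.3914 — 7 statements merged into one kernel-verified Lean document; each statement's English description precedes it below -/
import Mathlib

section
/- Let X_1,...,X_n be i.i.d. X-valued random variables with law P, let f : X → ℝ have finite variance Var_P(f), and let δ ∈ (0,1). Let V ≤ n/2 be an integer with V ≥ ln(1/δ), and let B_1,...,B_V be a partition of {1,...,n} with | |B_K| − n/V | ≤ 1 for all K. Define the median-of-means estimator P̄_B f = median{ (1/|B_K|) Σ_{i∈B_K} f(X_i) : K = 1,...,V }. Then P( P̄_B f − Pf > L_1 √(Var_P f) √(V/n) ) ≤ δ, where L_1 = 2√(6e). -/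
/-!
By Chebyshev, a block mean exceeds `Pf + t` with probability at most `1 / (12e)`: a block has at
least `n / (2V)` points and `t² = 24 e Var(f) V / n`. The block means are independent, and when
the median exceeds `Pf + t` at least `⌈V/2⌉` of them do, so a union bound over the possible sets of
such blocks gives `C(V, ⌈V/2⌉) (12e)^(-⌈V/2⌉) ≤ 2^V (2e)^(-V) = e^(-V) ≤ δ`. The threshold itself
is approached from above, which also covers `Var(f) = 0`.
-/

open MeasureTheory ProbabilityTheory Finset Real
open scoped ENNReal

section Independence

variable {Ω ι κ E : Type*} [MeasurableSpace Ω] [MeasurableSpace E] {μ : Measure Ω}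

lemma iIndepSet_preimage_blocks {X : ι → Ω → E} (hX : ∀ i, Measurable (X i))
    (hindep : iIndepFun X μ) {B : κ → Finset ι} (hB : Pairwise fun K K' => Disjoint (B K) (B K'))
    {T : ∀ K, Set (B K → E)} (hT : ∀ K, MeasurableSet (T K)) :
    iIndepSet (fun K => (fun ω (i : B K) => X i ω) ⁻¹' T K) μ := by
  classical
  have hmeas : ∀ S : Finset ι, Measurable fun ω (i : S) => X i ω :=
    fun S => measurable_pi_lambda _ fun i => hX i
  refine (iIndepSet_iff_meas_biInter fun K => hmeas _ (hT K)).2 fun S => ?_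
  induction S using Finset.induction_on with
  | empty => simp [hindep.isProbabilityMeasure]
  | @insert k S hkS IH =>
    rw [Finset.set_biInter_insert, Finset.prod_insert hkS, ← IH]
    have hdisj : Disjoint (B k) (S.biUnion B) :=
      (Finset.disjoint_biUnion_right _ _ _).2 fun K hK => hB fun h => hkS (h ▸ hK)
    have hsub : ∀ K ∈ S, ∀ i : B K, (i : ι) ∈ S.biUnion B :=
      fun K hK i => Finset.mem_biUnion.2 ⟨K, hK, i.2⟩
    -- the blocks of `S` are read off the single block `S.biUnion B`
    let W : Set (S.biUnion B → E) :=
      ⋂ K : S, (fun x (i : B K) => x ⟨i, hsub K K.2 i⟩) ⁻¹' T K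
    have hW : MeasurableSet W :=
      .iInter fun K => measurable_pi_lambda _ (fun _ => measurable_pi_apply _) (hT K)
    have hpre : (fun ω (i : S.biUnion B) => X i ω) ⁻¹' W
        = ⋂ K ∈ S, (fun ω (i : B K) => X i ω) ⁻¹' T K := by
      ext ω
      simp only [W, Set.mem_preimage, Set.mem_iInter, Subtype.forall]
    rw [← hpre]
    exact (hindep.indepFun_finset _ _ hdisj hX).measure_inter_preimage_eq_mul _ _ (hT k) hW

omit [MeasurableSpace E] in
lemma measure_le_card_filter_mem_le_choose_mul_pow [Fintype κ]
    {A : κ → Set Ω} [∀ K ω, Decidable (ω ∈ A K)] (hA : iIndepSet A μ) {p : ℝ≥0∞}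
    (hp : ∀ K, μ (A K) ≤ p) (m : ℕ) :
    μ {ω | m ≤ #{K | ω ∈ A K}} ≤ (Fintype.card κ).choose m * p ^ m := by
  have hcover : {ω | m ≤ #{K | ω ∈ A K}} ⊆ ⋃ S ∈ powersetCard m univ, ⋂ K ∈ S, A K := by
    intro ω hω
    obtain ⟨S, hS, hcard⟩ := exists_subset_card_eq hω
    exact Set.mem_biUnion (mem_powersetCard.2 ⟨subset_univ S, hcard⟩)
      (Set.mem_iInter₂.2 fun K hK => (mem_filter.1 (hS hK)).2)
  calc μ {ω | m ≤ #{K | ω ∈ A K}}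
      ≤ ∑ S ∈ powersetCard m univ, μ (⋂ K ∈ S, A K) :=
        (measure_mono hcover).trans (measure_biUnion_finset_le _ _)
    _ ≤ ∑ S ∈ powersetCard m (univ : Finset κ), p ^ m := by
        refine sum_le_sum fun S hS => ?_
        rw [hA.meas_biInter, ← (mem_powersetCard.1 hS).2, ← prod_const]
        exact prod_le_prod' fun K _ => hp K
    _ = (Fintype.card κ).choose m * p ^ m := by
        rw [sum_const, card_powersetCard, card_univ, nsmul_eq_mul]

end Independence

lemma measure_lt_le_of_forall_lt {Ω : Type*} [MeasurableSpace Ω] {μ : Measure Ω} {g : Ω → ℝ}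
    {t : ℝ} {c : ℝ≥0∞} (h : ∀ s, t < s → μ {ω | s < g ω} ≤ c) :
    μ {ω | t < g ω} ≤ c := by
  have hU : {ω | t < g ω} = ⋃ k : ℕ, {ω | t + 1 / (k + 1) < g ω} := by
    ext ω
    simp only [Set.mem_ofPred_eq, Set.mem_iUnion]
    refine ⟨fun hω => ?_, fun ⟨k, hk⟩ => lt_trans (lt_add_of_pos_right t (by positivity)) hk⟩
    obtain ⟨k, hk⟩ := exists_nat_one_div_lt (sub_pos.2 hω)
    exact ⟨k, by linarith⟩
  have hmono : Monotone fun k : ℕ => {ω | t + 1 / (k + 1) < g ω} := by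
    intro k l hkl ω hω
    exact lt_of_le_of_lt (by gcongr) (show t + 1 / (k + 1) < g ω from hω)
  rw [hU, hmono.measure_iUnion]
  exact iSup_le fun k => h _ (by simp only [lt_add_iff_pos_right]; positivity)

section SampleMean

variable {Ω ι E : Type*} [MeasurableSpace Ω] [MeasurableSpace E] {μ : Measure Ω}

lemma measure_lt_sampleMean_le [IsFiniteMeasure μ] {Y : ι → Ω → ℝ} (hY : ∀ i, MemLp (Y i) 2 μ)
    (hindep : Pairwise fun i j => IndepFun (Y i) (Y j) μ) {m v : ℝ}
    (hm : ∀ i, μ[Y i] = m) (hv : ∀ i, variance (Y i) μ = v) {s : Finset ι} (hs : s.Nonempty)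
    {t : ℝ} (ht : 0 < t) :
    μ {ω | m + t < (#s : ℝ)⁻¹ * ∑ i ∈ s, Y i ω} ≤ ENNReal.ofReal (v / (#s * t ^ 2)) := by
  have hs : (0 : ℝ) < #s := by exact_mod_cast hs.card_pos
  have hsum : MemLp (∑ i ∈ s, Y i) 2 μ := memLp_finsetSum' _ fun i _ => hY i
  have hmean : μ[∑ i ∈ s, Y i] = #s * m := by
    simp [integral_finsetSum _ fun i _ => (hY i).integrable one_le_two, hm]
  have hvar : variance (∑ i ∈ s, Y i) μ = #s * v := by
    simp [IndepFun.variance_sum (fun i _ => hY i) fun i _ j _ hij => hindep hij, hv]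
  have hsub : {ω | m + t < (#s : ℝ)⁻¹ * ∑ i ∈ s, Y i ω} ⊆
      {ω | #s * t ≤ |(∑ i ∈ s, Y i) ω - μ[∑ i ∈ s, Y i]|} := by
    intro ω hω
    rw [Set.mem_ofPred_eq, lt_inv_mul_iff₀ hs] at hω
    rw [Set.mem_ofPred_eq, hmean, Finset.sum_apply]
    exact le_abs.2 (Or.inl (by linarith))
  calc _ ≤ _ := measure_mono hsub
    _ ≤ ENNReal.ofReal (variance (∑ i ∈ s, Y i) μ / (#s * t) ^ 2) :=
        meas_ge_le_variance_div_sq hsum (by positivity)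
    _ = ENNReal.ofReal (v / (#s * t ^ 2)) := by
        rw [hvar]
        congr 1
        field_simp

lemma measure_lt_sampleMean_comp_le {X : ι → Ω → E} (hX : ∀ i, Measurable (X i))
    (hindep : iIndepFun X μ) {P : Measure E} (hid : ∀ i, μ.map (X i) = P) {f : E → ℝ}
    (hf : Measurable f) (hf2 : MemLp f 2 P) {s : Finset ι} (hs : s.Nonempty) {t : ℝ}
    (ht : 0 < t) :
    μ {ω | ∫ x, f x ∂P + t < (#s : ℝ)⁻¹ * ∑ i ∈ s, f (X i ω)} ≤
      ENNReal.ofReal (variance f P / (#s * t ^ 2)) := by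
  have := hindep.isProbabilityMeasure
  have hident : ∀ i, IdentDistrib (fun ω => f (X i ω)) f μ P := fun i =>
    (⟨(hX i).aemeasurable, aemeasurable_id, by simp [hid]⟩ : IdentDistrib (X i) id μ P).comp hf
  exact measure_lt_sampleMean_le (fun i => (hident i).memLp_iff.2 hf2)
    (fun i j hij => (hindep.comp (fun _ => f) fun _ => hf).indepFun hij)
    (fun i => (hident i).integral_eq) (fun i => (hident i).variance_eq) hs ht

end SampleMean

lemma choose_mul_pow_le_exp_neg (V : ℕ) :
    (V.choose ((V + 1) / 2) : ℝ) * (12 * exp 1)⁻¹ ^ ((V + 1) / 2) ≤ exp (-V) := by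
  set q := (2 * exp 1)⁻¹
  have hq₀ : 0 ≤ q := by positivity
  have hq₁ : q ≤ 1 := inv_le_one_of_one_le₀ (by linarith [add_one_le_exp (1 : ℝ)])
  -- `(12e)⁻¹ ≤ (2e)⁻²` because `e ≤ 3`
  have hr : (12 * exp 1)⁻¹ ≤ q ^ 2 := by
    rw [show q ^ 2 = ((2 * exp 1) ^ 2)⁻¹ from inv_pow _ _]
    exact inv_anti₀ (by positivity) (by nlinarith [exp_one_lt_d9, exp_pos 1])
  calc (V.choose ((V + 1) / 2) : ℝ) * (12 * exp 1)⁻¹ ^ ((V + 1) / 2)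
      ≤ 2 ^ V * q ^ V := by
        gcongr
        · exact_mod_cast Nat.choose_le_two_pow _ _
        · calc (12 * exp 1)⁻¹ ^ ((V + 1) / 2) ≤ (q ^ 2) ^ ((V + 1) / 2) := by gcongr
            _ ≤ q ^ V := by rw [← pow_mul]; exact pow_le_pow_of_le_one hq₀ hq₁ (by omega)
    _ = exp (-V) := by
        rw [← mul_pow, exp_neg, ← exp_one_pow, ← inv_pow]
        congr 1
        simp only [q]
        field_simp

lemma measure_median_sub_gt_le {Ω ι κ E : Type*} [MeasurableSpace Ω] [MeasurableSpace E]
    [Fintype κ] {μ : Measure Ω} {X : ι → Ω → E} (hX : ∀ i, Measurable (X i))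
    (hindep : iIndepFun X μ) {P : Measure E} (hid : ∀ i, μ.map (X i) = P) {f : E → ℝ}
    (hf : Measurable f) (hf2 : MemLp f 2 P) {B : κ → Finset ι}
    (hdisj : Pairwise fun K K' => Disjoint (B K) (B K')) (hne : ∀ K, (B K).Nonempty)
    {med : Ω → ℝ}
    (hmed : ∀ ω, Fintype.card κ ≤ 2 * #{K | med ω ≤ (#(B K) : ℝ)⁻¹ * ∑ i ∈ B K, f (X i ω)})
    {s : ℝ} (hs : 0 < s) (hblock : ∀ K, 12 * exp 1 * variance f P ≤ #(B K) * s ^ 2) :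
    μ {ω | s < med ω - ∫ x, f x ∂P} ≤ ENNReal.ofReal (exp (-(Fintype.card κ))) := by
  classical
  set A : κ → Set Ω := fun K => {ω | ∫ x, f x ∂P + s < (#(B K) : ℝ)⁻¹ * ∑ i ∈ B K, f (X i ω)}
  have hA_indep : iIndepSet A μ := by
    have hT : ∀ K,
        MeasurableSet {x : B K → E | ∫ x, f x ∂P + s < (#(B K) : ℝ)⁻¹ * ∑ i, f (x i)} :=
      fun K => measurableSet_lt measurable_const
        (measurable_const.mul (Finset.measurable_sum _ fun i _ => hf.comp (measurable_pi_apply i)))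
    convert iIndepSet_preimage_blocks hX hindep hdisj hT with K
    ext ω
    simp only [A, Set.mem_preimage, Set.mem_ofPred_eq]
    rw [Finset.sum_coe_sort (B K) fun i => f (X i ω)]
  have hA : ∀ K, μ (A K) ≤ ENNReal.ofReal (12 * exp 1)⁻¹ := fun K =>
    (measure_lt_sampleMean_comp_le hX hindep hid hf hf2 (hne K) hs).trans <|
      ENNReal.ofReal_le_ofReal <| div_le_of_le_mul₀ (by positivity) (by positivity) <| by
        rw [← div_le_iff₀' (by positivity), div_eq_inv_mul, inv_inv]
        exact hblock K
  have hsub : {ω | s < med ω - ∫ x, f x ∂P} ⊆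
      {ω | (Fintype.card κ + 1) / 2 ≤ #{K | ω ∈ A K}} := by
    intro ω hω
    have hle : #{K | med ω ≤ (#(B K) : ℝ)⁻¹ * ∑ i ∈ B K, f (X i ω)} ≤ #{K | ω ∈ A K} :=
      card_le_card fun K hK => by
        simp only [mem_filter, mem_univ, true_and, A, Set.mem_ofPred_eq] at hK ⊢
        linarith [Set.mem_ofPred_eq ▸ hω]
    have := hmed ω
    simp only [Set.mem_ofPred_eq]
    omega
  calc μ {ω | s < med ω - ∫ x, f x ∂P}
      ≤ (Fintype.card κ).choose ((Fintype.card κ + 1) / 2) *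
          ENNReal.ofReal (12 * exp 1)⁻¹ ^ ((Fintype.card κ + 1) / 2) :=
        (measure_mono hsub).trans (measure_le_card_filter_mem_le_choose_mul_pow hA_indep hA _)
    _ = ENNReal.ofReal ((Fintype.card κ).choose ((Fintype.card κ + 1) / 2) *
          (12 * exp 1)⁻¹ ^ ((Fintype.card κ + 1) / 2)) := by
        rw [ENNReal.ofReal_mul (by positivity), ENNReal.ofReal_pow (by positivity),
          ENNReal.ofReal_natCast]
    _ ≤ ENNReal.ofReal (exp (-(Fintype.card κ))) :=
        ENNReal.ofReal_le_ofReal (choose_mul_pow_le_exp_neg _)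

theorem median_of_means_concentration_general
    {Ω E : Type*} [MeasurableSpace Ω] [MeasurableSpace E]
    (μ : Measure Ω)
    (n V : ℕ)
    (X : Fin n → Ω → E) (hXmeas : ∀ i, Measurable (X i))
    (hindep : iIndepFun X μ)
    (P : Measure E) (hid : ∀ i, Measure.map (X i) μ = P)
    (f : E → ℝ) (hf : Measurable f) (hf2 : MemLp f 2 P)
    (δ : ℝ) (hδ : δ ∈ Set.Ioo (0 : ℝ) 1)
    (hVlow : Real.log (1 / δ) ≤ (V : ℝ)) (hVup : (V : ℝ) ≤ (n : ℝ) / 2)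
    (B : Fin V → Finset (Fin n))
    (hdisj : Pairwise (fun K K' => Disjoint (B K) (B K')))
    (hreg : ∀ K, |((B K).card : ℝ) - (n : ℝ) / V| ≤ 1)
    (med : Ω → ℝ)
    (hmed : ∀ ω,
      (V : ℝ) ≤ 2 * (Finset.univ.filter (fun K =>
          ((B K).card : ℝ)⁻¹ * ∑ i ∈ B K, f (X i ω) ≤ med ω)).card ∧
      (V : ℝ) ≤ 2 * (Finset.univ.filter (fun K =>
          med ω ≤ ((B K).card : ℝ)⁻¹ * ∑ i ∈ B K, f (X i ω))).card) :
    μ {ω | med ω - ∫ x, f x ∂P >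
        (2 * Real.sqrt (6 * Real.exp 1)) * Real.sqrt (variance f P) *
          Real.sqrt ((V : ℝ) / n)} ≤ ENNReal.ofReal δ := by
  have hV : (0 : ℝ) < V := (log_pos (one_lt_one_div hδ.1 hδ.2)).trans_le hVlow
  have hn : (0 : ℝ) < n := by linarith
  have hblock : ∀ K, (n : ℝ) / (2 * V) ≤ #(B K) := by
    have : (n : ℝ) / (2 * V) ≤ n / V - 1 := by
      field_simp
      linarith
    exact fun K => this.trans (by linarith [(abs_le.1 (hreg K)).1])
  have hδexp : exp (-V) ≤ δ := by
    rw [one_div, log_inv] at hVlow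
    exact (exp_le_exp.2 (by linarith)).trans_eq (exp_log hδ.1)
  refine measure_lt_le_of_forall_lt fun s hs => ?_
  have hs₀ : 0 < s := hs.trans_le' (by positivity)
  have hne : ∀ K, (B K).Nonempty := fun K => Finset.card_pos.1 <|
    Nat.cast_pos.1 ((by positivity : (0 : ℝ) < n / (2 * V)).trans_le (hblock K))
  have hs_sq : 24 * exp 1 * variance f P * (V / n) ≤ s ^ 2 := by
    have := pow_le_pow_left₀ (by positivity) hs.le 2
    rwa [mul_pow, mul_pow, mul_pow, sq_sqrt (by positivity), sq_sqrt (variance_nonneg f P),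
      sq_sqrt (by positivity), show (2 : ℝ) ^ 2 * (6 * exp 1) = 24 * exp 1 by ring] at this
  refine (measure_median_sub_gt_le hXmeas hindep hid hf hf2 hdisj hne (fun ω => ?_) hs₀
    fun K => ?_).trans ?_
  · simpa [← Nat.cast_le (α := ℝ)] using (hmed ω).2
  · calc 12 * exp 1 * variance f P = n / (2 * V) * (24 * exp 1 * variance f P * (V / n)) := by
          field_simp
          ring
      _ ≤ #(B K) * s ^ 2 := by
          have := variance_nonneg f P
          gcongr
          exact hblock K
  · simpa using ENNReal.ofReal_le_ofReal hδexp

/-- Median-of-means concentration (Proposition 1): if `X 1, ..., X n` are i.i.d.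
with law `P`, `f` has finite variance, `B 1, ..., B V` is a regular partition of
`{1,...,n}` with `ln(1/δ) ≤ V ≤ n/2`, and `med ω` is any median of the block
empirical means of `f`, then the median-of-means estimator deviates from `Pf`
by more than `L₁ √(Var f) √(V/n)` with probability at most `δ`, `L₁ = 2√(6e)`. -/
theorem median_of_means_concentration
    {Ω E : Type*} [MeasurableSpace Ω] [MeasurableSpace E]
    (μ : Measure Ω) [IsProbabilityMeasure μ]
    (n V : ℕ) (hn : 0 < n) (hV : 0 < V)
    (X : Fin n → Ω → E) (hXmeas : ∀ i, Measurable (X i))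
    (hindep : iIndepFun X μ)
    (P : Measure E) (hid : ∀ i, Measure.map (X i) μ = P)
    (f : E → ℝ) (hf : Measurable f) (hf2 : MemLp f 2 P)
    (δ : ℝ) (hδ : δ ∈ Set.Ioo (0 : ℝ) 1)
    (hVlow : Real.log (1 / δ) ≤ (V : ℝ)) (hVup : (V : ℝ) ≤ (n : ℝ) / 2)
    (B : Fin V → Finset (Fin n))
    (hdisj : Pairwise (fun K K' => Disjoint (B K) (B K')))
    (hcover : Finset.univ.biUnion B = Finset.univ)
    (hreg : ∀ K, |((B K).card : ℝ) - (n : ℝ) / V| ≤ 1)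
    (med : Ω → ℝ)
    (hmed : ∀ ω,
      (V : ℝ) ≤ 2 * (Finset.univ.filter (fun K =>
          ((B K).card : ℝ)⁻¹ * ∑ i ∈ B K, f (X i ω) ≤ med ω)).card ∧
      (V : ℝ) ≤ 2 * (Finset.univ.filter (fun K =>
          med ω ≤ ((B K).card : ℝ)⁻¹ * ∑ i ∈ B K, f (X i ω))).card) :
    μ {ω | med ω - ∫ x, f x ∂P >
        (2 * Real.sqrt (6 * Real.exp 1)) * Real.sqrt (variance f P) *
          Real.sqrt ((V : ℝ) / n)} ≤ ENNReal.ofReal δ :=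
  median_of_means_concentration_general μ n V X hXmeas hindep P hid f hf hf2 δ hδ hVlow hVup B hdisj
    hreg med hmed
end

section
/- Let ŝ_K be any estimator valued in the linear span S of an orthonormal system (ψ_λ)_{λ∈Λ} in L²(μ) and measurable with respect to σ(X_{B_K}), and let X be an independent copy of X_1. Then for the L² density contrast γ(t) = ‖t‖² − 2t: Var( (γ(ŝ_K) − γ(s_o))(X) | X_{B_K} ) ≤ 4 ‖ŝ_K − s_o‖² (PΨ − ‖s_o‖²), where Ψ = Σ_λ ψ_λ² and s_o is the orthogonal projection of s⋆ onto S. -/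
/-!
Up to an additive constant, the contrast difference `γ(u) - γ(s_o)` is `-2 (u - s_o)`, and
`u - s_o = Σ_λ c_λ ψ_λ` with `c_λ = a_λ - Pψ_λ`; so its variance is `4 Var(Σ_λ c_λ ψ_λ)`.
Cauchy–Schwarz applied pointwise to the centred sum `Σ_λ c_λ (ψ_λ - Pψ_λ)` gives
`Var(Σ_λ c_λ ψ_λ) ≤ (Σ_λ c_λ²) Σ_λ Var ψ_λ = (Σ_λ c_λ²) (PΨ - Σ_λ (Pψ_λ)²)`, and orthonormality
identifies `Σ_λ c_λ²` with `‖u - s_o‖²` and `Σ_λ (Pψ_λ)²` with `‖s_o‖²`.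
-/

open MeasureTheory ProbabilityTheory

section Orthonormal

variable {E Λ : Type*} [MeasurableSpace E] {ν : Measure E}

lemma memLp_two_of_integral_mul_self_ne_zero {f : E → ℝ} (hf : AEStronglyMeasurable f ν)
    (h : ∫ x, f x * f x ∂ν ≠ 0) : MemLp f 2 ν := by
  refine (memLp_two_iff_integrable_sq hf).2 ?_
  by_contra hint
  exact h (integral_undef (by simpa only [sq] using hint))

lemma integral_sq_sum_mul_of_orthonormal [Fintype Λ] [DecidableEq Λ] {ψ : Λ → E → ℝ}
    (hψ : ∀ l, Measurable (ψ l))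
    (horth : ∀ l l', ∫ x, ψ l x * ψ l' x ∂ν = if l = l' then 1 else 0) (d : Λ → ℝ) :
    ∫ x, (∑ l, d l * ψ l x) ^ 2 ∂ν = ∑ l, d l ^ 2 := by
  have hL2 : ∀ l, MemLp (ψ l) 2 ν := fun l =>
    memLp_two_of_integral_mul_self_ne_zero (hψ l).aestronglyMeasurable (by simp [horth])
  have hint : ∀ l l', Integrable (fun x => d l * d l' * (ψ l x * ψ l' x)) ν := fun l l' =>
    ((hL2 l).integrable_mul (hL2 l')).const_mul _
  have hexpand : ∀ x, (∑ l, d l * ψ l x) ^ 2 = ∑ l, ∑ l', d l * d l' * (ψ l x * ψ l' x) :=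
    fun x => by
      rw [sq, Finset.sum_mul_sum]
      exact Finset.sum_congr rfl fun l _ => Finset.sum_congr rfl fun l' _ => by ring
  simp_rw [hexpand]
  rw [integral_finsetSum _ fun l _ => integrable_finsetSum _ fun l' _ => hint l l']
  refine Finset.sum_congr rfl fun l _ => ?_
  rw [integral_finsetSum _ fun l' _ => hint l l']
  simp [integral_const_mul, horth, sq]

end Orthonormal

section Variance

variable {Ω ι : Type*} [MeasurableSpace Ω] {μ : Measure Ω} [IsProbabilityMeasure μ] [Fintype ι]
  {f : ι → Ω → ℝ}

lemma variance_sum_mul_le (hf : ∀ i, MemLp (f i) 2 μ) (c : ι → ℝ) :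
    Var[fun ω => ∑ i, c i * f i ω; μ] ≤ (∑ i, c i ^ 2) * ∑ i, Var[f i; μ] := by
  have hcentred : ∀ ω, ∑ i, c i * f i ω - ∫ ω', ∑ i, c i * f i ω' ∂μ
      = ∑ i, c i * (f i ω - ∫ ω', f i ω' ∂μ) := fun ω => by
    rw [integral_finsetSum _ fun i _ => ((hf i).integrable one_le_two).const_mul _,
      ← Finset.sum_sub_distrib]
    exact Finset.sum_congr rfl fun i _ => by rw [integral_const_mul]; ring
  have hsq : ∀ i, Integrable (fun ω => (f i ω - ∫ ω', f i ω' ∂μ) ^ 2) μ := fun i =>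
    ((hf i).sub (memLp_const _)).integrable_sq
  rw [variance_eq_integral
    (Finset.aemeasurable_fun_sum _ fun i _ => (hf i).aemeasurable.const_mul _)]
  simp_rw [hcentred]
  calc ∫ ω, (∑ i, c i * (f i ω - ∫ ω', f i ω' ∂μ)) ^ 2 ∂μ
      ≤ ∫ ω, (∑ i, c i ^ 2) * ∑ i, (f i ω - ∫ ω', f i ω' ∂μ) ^ 2 ∂μ := by
        refine integral_mono ?_ ((integrable_finsetSum _ fun i _ => hsq i).const_mul _)
          fun ω => Finset.sum_mul_sq_le_sq_mul_sq _ _ _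
        exact (memLp_finsetSum _ fun i _ =>
          ((hf i).sub (memLp_const _)).const_mul (c i)).integrable_sq
    _ = (∑ i, c i ^ 2) * ∑ i, Var[f i; μ] := by
        rw [integral_const_mul, integral_finsetSum _ fun i _ => hsq i]
        simp_rw [variance_eq_integral (hf _).aemeasurable]

lemma sum_variance_eq_sub (hf : ∀ i, MemLp (f i) 2 μ) :
    ∑ i, Var[f i; μ] = ∫ ω, ∑ i, f i ω ^ 2 ∂μ - ∑ i, (∫ ω, f i ω ∂μ) ^ 2 := by
  rw [integral_finsetSum _ fun i _ => (hf i).integrable_sq, ← Finset.sum_sub_distrib]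
  exact Finset.sum_congr rfl fun i _ => variance_eq_sub (hf i)

end Variance

theorem margin_condition_density_L2_general
    {E Λ : Type*} [MeasurableSpace E] [Fintype Λ] [DecidableEq Λ]
    (ν : Measure E)
    (P : Measure E)
    [IsProbabilityMeasure P]
    (ψ : Λ → E → ℝ) (hψ : ∀ l, Measurable (ψ l))
    (horth : ∀ l l', ∫ x, ψ l x * ψ l' x ∂ν = if l = l' then 1 else 0)
    (hψ2P : ∀ l, MemLp (ψ l) 2 P)
    (a : Λ → ℝ) :
    variance (fun x =>
        ((∫ y, (∑ l, a l * ψ l y) ^ 2 ∂ν) - 2 * (∑ l, a l * ψ l x))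
          - ((∫ y, (∑ l, (∫ z, ψ l z ∂P) * ψ l y) ^ 2 ∂ν)
              - 2 * (∑ l, (∫ z, ψ l z ∂P) * ψ l x))) P
      ≤ 4 * (∫ y, (∑ l, a l * ψ l y - ∑ l, (∫ z, ψ l z ∂P) * ψ l y) ^ 2 ∂ν)
          * ((∫ x, (∑ l, (ψ l x) ^ 2) ∂P)
              - ∫ y, (∑ l, (∫ z, ψ l z ∂P) * ψ l y) ^ 2 ∂ν) := by
  set b : Λ → ℝ := fun l => ∫ z, ψ l z ∂P
  simp only [show ∀ l, ∫ z, ψ l z ∂P = b l from fun _ => rfl]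
  have hdiff : ∀ x, ∑ l, a l * ψ l x - ∑ l, b l * ψ l x = ∑ l, (a l - b l) * ψ l x := fun x => by
    rw [← Finset.sum_sub_distrib]
    exact Finset.sum_congr rfl fun l _ => by ring
  set C := (∫ y, (∑ l, a l * ψ l y) ^ 2 ∂ν) - ∫ y, (∑ l, b l * ψ l y) ^ 2 ∂ν
  have hcontrast : ∀ x, (∫ y, (∑ l, a l * ψ l y) ^ 2 ∂ν) - 2 * ∑ l, a l * ψ l x
      - ((∫ y, (∑ l, b l * ψ l y) ^ 2 ∂ν) - 2 * ∑ l, b l * ψ l x)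
      = C + -2 * ∑ l, (a l - b l) * ψ l x := fun x => by
    rw [← hdiff]; ring
  simp_rw [hcontrast, hdiff, integral_sq_sum_mul_of_orthonormal hψ horth]
  rw [variance_const_add (by fun_prop), variance_const_mul]
  calc (-2) ^ 2 * Var[fun x => ∑ l, (a l - b l) * ψ l x; P]
      ≤ 4 * ((∑ l, (a l - b l) ^ 2) * ∑ l, Var[ψ l; P]) := by
        rw [neg_sq, show (2 : ℝ) ^ 2 = 4 by norm_num]
        gcongr
        exact variance_sum_mul_le hψ2P _
    _ = _ := by rw [sum_variance_eq_sub hψ2P, mul_assoc]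

/-- Margin-type bound (Proposition 4, condition CMarg) for least-squares density
estimation: for any element `u = Σ_λ a_λ ψ_λ` of the model `S` (in particular any
estimator built from the block `X_{B_K}`, conditionally on that block),
`Var_P(γ(u) - γ(s_o)) ≤ 4 ‖u - s_o‖² (PΨ - ‖s_o‖²)`, where `γ(t) = ‖t‖² - 2t`,
`s_o = Σ_λ (Pψ_λ)ψ_λ` and `Ψ = Σ_λ ψ_λ²`. -/
theorem margin_condition_density_L2
    {E Λ : Type*} [MeasurableSpace E] [Fintype Λ] [DecidableEq Λ]
    (ν : Measure E) [SigmaFinite ν]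
    (sstar : E → ℝ) (hs0 : ∀ x, 0 ≤ sstar x) (hs2 : MemLp sstar 2 ν)
    (P : Measure E) (hP : P = ν.withDensity (fun x => ENNReal.ofReal (sstar x)))
    [IsProbabilityMeasure P]
    (ψ : Λ → E → ℝ) (hψ : ∀ l, Measurable (ψ l))
    (horth : ∀ l l', ∫ x, ψ l x * ψ l' x ∂ν = if l = l' then 1 else 0)
    (hψ2P : ∀ l, MemLp (ψ l) 2 P)
    (a : Λ → ℝ) :
    variance (fun x =>
        ((∫ y, (∑ l, a l * ψ l y) ^ 2 ∂ν) - 2 * (∑ l, a l * ψ l x))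
          - ((∫ y, (∑ l, (∫ z, ψ l z ∂P) * ψ l y) ^ 2 ∂ν)
              - 2 * (∑ l, (∫ z, ψ l z ∂P) * ψ l x))) P
      ≤ 4 * (∫ y, (∑ l, a l * ψ l y - ∑ l, (∫ z, ψ l z ∂P) * ψ l y) ^ 2 ∂ν)
          * ((∫ x, (∑ l, (ψ l x) ^ 2) ∂P)
              - ∫ y, (∑ l, (∫ z, ψ l z ∂P) * ψ l y) ^ 2 ∂ν) :=
  margin_condition_density_L2_general ν P ψ hψ horth hψ2P a
end

section
/- For all probability measures P, Q with P absolutely continuous with respect to Q, (1/2) ∫ (dP ∧ dQ) (ln(dP/dQ))² ≤ ∫ dP ln(dP/dQ), i.e. half the integral of the squared log-likelihood ratio against the minimum measure is bounded by the Kullback–Leibler divergence. -/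
open MeasureTheory

open Real

lemma quad_le_exp {s : ℝ} (hs : 0 ≤ s) : 1 + s + s ^ 2 / 2 ≤ Real.exp s := by
  have h := Real.sum_le_exp_of_nonneg hs 3
  simp [Finset.sum_range_succ] at h
  nlinarith [h]

lemma caseB {t : ℝ} (ht : 0 ≤ t) : (1 / 2) * t ^ 2 ≤ Real.exp t * t - Real.exp t + 1 := by
  rcases le_total t 1 with h1 | h1
  · have hB := Real.exp_bound' ht h1 (n := 3) (by norm_num)
    norm_num [Finset.sum_range_succ, Nat.factorial] at hB
    nlinarith [hB, pow_nonneg ht 3, pow_nonneg ht 4, mul_nonneg (sub_nonneg.mpr h1) (Real.exp_pos t).le]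
  · have hA := quad_le_exp (le_trans zero_le_one h1)
    nlinarith [hA, sq_nonneg t]

lemma key {r : ℝ} (hr : 0 ≤ r) :
    (1 / 2) * (min r 1 * (Real.log r) ^ 2) ≤ r * Real.log r - r + 1 := by
  rcases eq_or_lt_of_le hr with h0 | h0
  · simp [← h0]
  rcases le_total r 1 with h1 | h1
  · rw [min_eq_left h1]
    set t := Real.log r with ht
    have hr' : r = Real.exp t := (Real.exp_log h0).symm
    have hA := quad_le_exp (s := -t) (by
      rw [ht]; simpa using Real.log_nonpos hr h1)
    rw [Real.exp_neg] at hA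
    have hEpos := Real.exp_pos t
    have : Real.exp t * (1 + -t + (-t) ^ 2 / 2) ≤ 1 := by
      calc Real.exp t * (1 + -t + (-t) ^ 2 / 2) ≤ Real.exp t * (Real.exp t)⁻¹ :=
            mul_le_mul_of_nonneg_left hA hEpos.le
        _ = 1 := mul_inv_cancel₀ hEpos.ne'
    rw [hr']
    nlinarith [this]
  · rw [min_eq_right h1]
    set t := Real.log r with ht
    have hr' : r = Real.exp t := (Real.exp_log h0).symm
    have htn : 0 ≤ t := Real.log_nonneg h1
    have := caseB htn
    rw [hr']; linarith


/-- Massart's variance–Kullback lemma (Lemma 7.24): for probability measures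
`P ≪ Q`, `(1/2) ∫ (dP ∧ dQ) (ln(dP/dQ))² ≤ KL(P, Q)`. Taking `Q` as reference
measure, `dP ∧ dQ` has density `min(dP/dQ, 1)` with respect to `Q`, and
`KL(P,Q) = ∫ ln(dP/dQ) dP`, the integral of the log-likelihood ratio `llr P Q`. -/
theorem half_sq_llr_min_le_klDiv
    {α : Type*} [MeasurableSpace α] (P Q : Measure α)
    [IsProbabilityMeasure P] [IsProbabilityMeasure Q]
    (hPQ : P ≪ Q)
    (hint1 : Integrable (llr P Q) P)
    (hint2 : Integrable
      (fun x => min ((P.rnDeriv Q x).toReal) 1 * (llr P Q x) ^ 2) Q) :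
    (1 / 2) * ∫ x, min ((P.rnDeriv Q x).toReal) 1 * (llr P Q x) ^ 2 ∂Q
      ≤ ∫ x, llr P Q x ∂P := by
  have hrl_int : Integrable (fun x => (P.rnDeriv Q x).toReal * llr P Q x) Q := by
    have := (MeasureTheory.integrable_rnDeriv_smul_iff (f := llr P Q) hPQ).mpr hint1
    simpa [smul_eq_mul] using this
  have hr_int : Integrable (fun x => (P.rnDeriv Q x).toReal) Q :=
    Measure.integrable_toReal_rnDeriv
  have hF_int : Integrable
      (fun x => (P.rnDeriv Q x).toReal * llr P Q x - (P.rnDeriv Q x).toReal + 1) Q :=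
    (hrl_int.sub hr_int).add (integrable_const 1)
  have hmono : (1 / 2) * ∫ x, min ((P.rnDeriv Q x).toReal) 1 * (llr P Q x) ^ 2 ∂Q
      ≤ ∫ x, ((P.rnDeriv Q x).toReal * llr P Q x - (P.rnDeriv Q x).toReal + 1) ∂Q := by
    rw [← integral_const_mul]
    refine integral_mono (hint2.const_mul _) hF_int ?_
    intro x
    exact key ENNReal.toReal_nonneg
  have hsmul : ∫ x, (P.rnDeriv Q x).toReal * llr P Q x ∂Q = ∫ x, llr P Q x ∂P := by
    have := MeasureTheory.integral_rnDeriv_smul (f := llr P Q) hPQ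
    simpa [smul_eq_mul] using this
  have hone : ∫ x, (P.rnDeriv Q x).toReal ∂Q = 1 := by
    rw [Measure.integral_toReal_rnDeriv hPQ]; simp
  calc (1 / 2) * ∫ x, min ((P.rnDeriv Q x).toReal) 1 * (llr P Q x) ^ 2 ∂Q
      ≤ ∫ x, ((P.rnDeriv Q x).toReal * llr P Q x - (P.rnDeriv Q x).toReal + 1) ∂Q := hmono
    _ = ∫ x, (P.rnDeriv Q x).toReal * llr P Q x ∂Q - ∫ x, (P.rnDeriv Q x).toReal ∂Q + 1 := by
        have hsub : Integrable
            (fun x => (P.rnDeriv Q x).toReal * llr P Q x - (P.rnDeriv Q x).toReal) Q :=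
          hrl_int.sub hr_int
        rw [integral_add hsub (integrable_const 1), integral_sub hrl_int hr_int,
          integral_const]
        simp
    _ = ∫ x, llr P Q x ∂P := by rw [hsmul, hone]; ring
end

section
/- Let s_o and ŝ be probability densities on [0,1] with ŝ ≥ x/(1+x) pointwise for some x > 0 and sup ln(s_o/ŝ) ≤ ln(1 + 1/x). Then ∫ s_o (ln(s_o/ŝ))² dμ ≤ (2 + 3 ln(1 + 1/x)) ∫ s_o ln(s_o/ŝ) dμ. In particular the conditional variance of the log-likelihood contrast is at most (2 + 3 ln(1 + 1/x)) times the Kullback excess risk. -/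
/-!
Write `u = s_o / ŝ`, so that `s_o ln²(s_o/ŝ) = ŝ · u ln² u` and
`s_o ln(s_o/ŝ) + ŝ - s_o = ŝ · klFun u` with `klFun u = u ln u + 1 - u ≥ 0`. Once `ln u ≤ L` with
`L ≥ 0`, the scalar inequality `u ln² u ≤ (2 + L) klFun u` holds: the difference
`(2 + L) klFun v - v ln² v` vanishes at `v = 1` and has derivative `ln v (L - ln v)`, so it
decreases on `(0, 1]` and increases on `[1, u]`. Multiplying by `ŝ` and integrating, the terms
`∫ ŝ - ∫ s_o` cancel because both densities have mass one.
-/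

open MeasureTheory InformationTheory Real Set

lemma hasDerivAt_mul_log_sq {u : ℝ} (hu : u ≠ 0) :
    HasDerivAt (fun v => v * log v ^ 2) (log u ^ 2 + 2 * log u) u :=
  ((hasDerivAt_id' u).mul ((hasDerivAt_log hu).pow 2)).congr_deriv (by field_simp; simp; ring)

lemma mul_log_sq_le_mul_klFun {u L : ℝ} (hu : 0 ≤ u) (hL : 0 ≤ L) (huL : log u ≤ L) :
    u * log u ^ 2 ≤ (2 + L) * klFun u := by
  rcases hu.eq_or_lt with rfl | hu
  · rw [klFun_zero, zero_mul]
    linarith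
  set g : ℝ → ℝ := fun v => (2 + L) * klFun v - v * log v ^ 2 with hg_def
  have hg : ∀ v, 0 < v → HasDerivAt g (log v * (L - log v)) v := fun v hv =>
    (((hasDerivAt_klFun hv.ne').const_mul (2 + L)).sub (hasDerivAt_mul_log_sq hv.ne')).congr_deriv
      (by ring)
  have hg_diff : ∀ a b, 0 < a → DifferentiableOn ℝ g (Icc a b) := fun a b ha v hv =>
    (hg v (ha.trans_le hv.1)).differentiableAt.differentiableWithinAt
  suffices g 1 ≤ g u by simpa [hg_def, klFun_one] using this
  rcases le_total u 1 with hu1 | hu1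
  · refine antitoneOn_of_deriv_nonpos (convex_Icc u 1) (hg_diff u 1 hu).continuousOn
      ((hg_diff u 1 hu).mono interior_subset) (fun v hv => ?_)
      (left_mem_Icc.2 hu1) (right_mem_Icc.2 hu1) hu1
    rw [interior_Icc] at hv
    have hv0 : 0 < v := hu.trans hv.1
    have hlog : log v ≤ 0 := log_nonpos hv0.le hv.2.le
    rw [(hg v hv0).deriv]
    exact mul_nonpos_of_nonpos_of_nonneg hlog (by linarith)
  · refine monotoneOn_of_deriv_nonneg (convex_Icc 1 u) (hg_diff 1 u one_pos).continuousOn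
      ((hg_diff 1 u one_pos).mono interior_subset) (fun v hv => ?_)
      (left_mem_Icc.2 hu1) (right_mem_Icc.2 hu1) hu1
    rw [interior_Icc] at hv
    have hv0 : 0 < v := one_pos.trans hv.1
    have hlog : log v ≤ L := (log_le_log hv0 hv.2.le).trans huL
    rw [(hg v hv0).deriv]
    exact mul_nonneg (log_nonneg hv.1.le) (by linarith)

lemma mul_log_div_sq_le {p q L C : ℝ} (hp : 0 ≤ p) (hq : 0 < q) (hL : 0 ≤ L) (hC : 2 + L ≤ C)
    (hpq : log (p / q) ≤ L) :
    p * log (p / q) ^ 2 ≤ C * (p * log (p / q) + q - p) := by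
  have hklFun : q * klFun (p / q) = p * log (p / q) + q - p := by
    rw [klFun_apply]
    field_simp
  calc p * log (p / q) ^ 2 = q * (p / q * log (p / q) ^ 2) := by field_simp
    _ ≤ q * ((2 + L) * klFun (p / q)) :=
      mul_le_mul_of_nonneg_left (mul_log_sq_le_mul_klFun (div_nonneg hp hq.le) hL hpq) hq.le
    _ ≤ q * (C * klFun (p / q)) := by
      gcongr
      exact klFun_nonneg (div_nonneg hp hq.le)
    _ = C * (p * log (p / q) + q - p) := by rw [← hklFun]; ring

theorem integral_mul_log_div_sq_le {α : Type*} [MeasurableSpace α] {μ : Measure α}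
    {p q : α → ℝ} {L C : ℝ} (hp : ∀ a, 0 ≤ p a) (hq : ∀ a, 0 < q a) (hL : 0 ≤ L)
    (hC : 2 + L ≤ C) (hpq : ∀ a, log (p a / q a) ≤ L) (hp_int : Integrable p μ)
    (hq_int : Integrable q μ) (h_mass : ∫ a, p a ∂μ = ∫ a, q a ∂μ)
    (h_sq_int : Integrable (fun a => p a * log (p a / q a) ^ 2) μ)
    (h_kl_int : Integrable (fun a => p a * log (p a / q a)) μ) :
    ∫ a, p a * log (p a / q a) ^ 2 ∂μ ≤ C * ∫ a, p a * log (p a / q a) ∂μ := by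
  have h_add_int : Integrable (fun a => p a * log (p a / q a) + q a) μ := h_kl_int.add hq_int
  calc ∫ a, p a * log (p a / q a) ^ 2 ∂μ
      ≤ ∫ a, C * (p a * log (p a / q a) + q a - p a) ∂μ :=
        integral_mono h_sq_int ((h_add_int.sub hp_int).const_mul C)
          fun a => mul_log_div_sq_le (hp a) (hq a) hL hC (hpq a)
    _ = C * ∫ a, p a * log (p a / q a) ∂μ := by
        rw [integral_const_mul, integral_sub h_add_int hp_int,
          integral_add h_kl_int hq_int, h_mass, add_sub_cancel_right]

theorem kullback_second_moment_bound_general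
    {α : Type*} [MeasurableSpace α] (μ : Measure α)
    (so shat : α → ℝ) (x : ℝ) (hx : 0 < x)
    (hso0 : ∀ a, 0 ≤ so a) (hso1 : ∫ a, so a ∂μ = 1)
    (hshat1 : ∫ a, shat a ∂μ = 1)
    (hshatlow : ∀ a, x / (1 + x) ≤ shat a)
    (hratio : ∀ a, Real.log (so a / shat a) ≤ Real.log (1 + 1 / x))
    (hint1 : Integrable (fun a => so a * (Real.log (so a / shat a)) ^ 2) μ)
    (hint2 : Integrable (fun a => so a * Real.log (so a / shat a)) μ) :
    ∫ a, so a * (Real.log (so a / shat a)) ^ 2 ∂μ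
      ≤ (2 + 3 * Real.log (1 + 1 / x)) * ∫ a, so a * Real.log (so a / shat a) ∂μ := by
  have hL : 0 ≤ Real.log (1 + 1 / x) := log_nonneg (by linarith [one_div_pos.2 hx])
  have hshat_pos : ∀ a, 0 < shat a := fun a => (div_pos hx (by linarith)).trans_le (hshatlow a)
  exact integral_mul_log_div_sq_le hso0 hshat_pos hL (by linarith) hratio
    (integrable_of_integral_eq_one hso1) (integrable_of_integral_eq_one hshat1)
    (hso1.trans hshat1.symm) hint1 hint2

/-- Kullback margin bound (from the proof of Proposition 6): if `s_o` and `ŝ` are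
probability densities with `ŝ ≥ x/(1+x)` pointwise and
`ln(s_o/ŝ) ≤ ln(1 + 1/x)` pointwise, then the second log-moment
`∫ s_o (ln(s_o/ŝ))²` is at most `(2 + 3 ln(1 + 1/x))` times the Kullback
divergence `∫ s_o ln(s_o/ŝ)`. -/
theorem kullback_second_moment_bound
    {α : Type*} [MeasurableSpace α] (μ : Measure α)
    (so shat : α → ℝ) (x : ℝ) (hx : 0 < x)
    (hso0 : ∀ a, 0 ≤ so a) (hso1 : ∫ a, so a ∂μ = 1)
    (hshat1 : ∫ a, shat a ∂μ = 1)
    (hsomeas : Measurable so) (hshatmeas : Measurable shat)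
    (hshatlow : ∀ a, x / (1 + x) ≤ shat a)
    (hratio : ∀ a, Real.log (so a / shat a) ≤ Real.log (1 + 1 / x))
    (hint1 : Integrable (fun a => so a * (Real.log (so a / shat a)) ^ 2) μ)
    (hint2 : Integrable (fun a => so a * Real.log (so a / shat a)) μ) :
    ∫ a, so a * (Real.log (so a / shat a)) ^ 2 ∂μ
      ≤ (2 + 3 * Real.log (1 + 1 / x)) * ∫ a, so a * Real.log (so a / shat a) ∂μ :=
  kullback_second_moment_bound_general μ so shat x hx hso0 hso1 hshat1 hshatlow hratio hint1 hint2
end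

section
/- For all u ≤ 1 − Γ^{-1} with Γ > 1 and u < 1: (−ln(1−u) − u)/u² ≤ Γ² ln(Γ)/(Γ−1)² + Γ/(Γ−1). -/
/-!
Writing `-log (1 - u) - u = ∫₀¹ u² s / (1 - u s) ds`, the quotient `(-log (1 - u) - u) / u²` is
the integral of `s / (1 - u s)` over `[0, 1]`, which is increasing in `u < 1`. Hence it is at most
its value at `u = 1 - Γ⁻¹`, which is `Γ² log Γ / (Γ - 1)² - Γ / (Γ - 1)`.
-/

open Real Set intervalIntegral MeasureTheory

lemma one_sub_mul_pos {u s : ℝ} (hu : u < 1) (hs : s ∈ Icc (0 : ℝ) 1) : 0 < 1 - u * s := by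
  obtain ⟨hs0, hs1⟩ := hs
  rcases le_or_gt u 0 with h | h <;> nlinarith

lemma continuousOn_div_one_sub_mul {u : ℝ} (hu : u < 1) :
    ContinuousOn (fun s : ℝ => s / (1 - u * s)) (Icc 0 1) :=
  continuousOn_id.div (by fun_prop) fun _ hs => (one_sub_mul_pos hu hs).ne'

lemma integral_div_one_sub_mul {u : ℝ} (hu : u < 1) (hu0 : u ≠ 0) :
    ∫ s in (0 : ℝ)..1, s / (1 - u * s) = (-log (1 - u) - u) / u ^ 2 := by
  have hderiv : ∀ s ∈ uIcc (0 : ℝ) 1,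
      HasDerivAt (fun s => (-log (1 - u * s) - u * s) / u ^ 2) (s / (1 - u * s)) s := by
    intro s hs
    rw [uIcc_of_le zero_le_one] at hs
    have hne := (one_sub_mul_pos hu hs).ne'
    have hlin : HasDerivAt (fun s : ℝ => 1 - u * s) (-u) s := by
      simpa using ((hasDerivAt_id s).const_mul u).const_sub 1
    have hmul : HasDerivAt (fun s : ℝ => u * s) u s := by
      simpa using (hasDerivAt_id s).const_mul u
    refine (((hlin.log hne).neg.sub hmul).div_const (u ^ 2)).congr_deriv ?_
    field_simp
    ring
  rw [integral_eq_sub_of_hasDerivAt hderiv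
    ((continuousOn_div_one_sub_mul hu).mono (uIcc_of_le zero_le_one).subset).intervalIntegrable]
  simp

lemma integral_div_one_sub_mul_mono {u v : ℝ} (huv : u ≤ v) (hv : v < 1) :
    ∫ s in (0 : ℝ)..1, s / (1 - u * s) ≤ ∫ s in (0 : ℝ)..1, s / (1 - v * s) := by
  have hu := huv.trans_lt hv
  refine integral_mono_on zero_le_one
    ((continuousOn_div_one_sub_mul hu).intervalIntegrable_of_Icc zero_le_one)
    ((continuousOn_div_one_sub_mul hv).intervalIntegrable_of_Icc zero_le_one) fun s hs => ?_
  exact div_le_div_of_nonneg_left hs.1 (one_sub_mul_pos hv hs)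
    (by nlinarith [hs.1])

-- At `u = 0` the quotient takes the junk value `0`, below its limit `1 / 2`.
lemma neg_log_one_sub_sub_div_sq_mono {u v : ℝ} (huv : u ≤ v) (hv : v < 1) (hv0 : v ≠ 0) :
    (-log (1 - u) - u) / u ^ 2 ≤ (-log (1 - v) - v) / v ^ 2 := by
  rw [← integral_div_one_sub_mul hv hv0]
  rcases eq_or_ne u 0 with rfl | hu0
  · rw [sub_zero, sub_zero, log_one, neg_zero, zero_div]
    exact integral_nonneg zero_le_one fun s hs => div_nonneg hs.1 (one_sub_mul_pos hv hs).le
  rw [← integral_div_one_sub_mul (huv.trans_lt hv) hu0]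
  exact integral_div_one_sub_mul_mono huv hv

lemma neg_log_one_sub_sub_div_sq_one_sub_inv {Γ : ℝ} (hΓ0 : Γ ≠ 0) (hΓ1 : Γ ≠ 1) :
    (-log (1 - (1 - Γ⁻¹)) - (1 - Γ⁻¹)) / (1 - Γ⁻¹) ^ 2
      = Γ ^ 2 * log Γ / (Γ - 1) ^ 2 - Γ / (Γ - 1) := by
  have hΓ1' : Γ - 1 ≠ 0 := sub_ne_zero.mpr hΓ1
  rw [sub_sub_cancel, log_inv, neg_neg]
  field_simp

theorem neg_log_one_sub_div_sq_bound_general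
    (Γ : ℝ) (hΓ : 1 < Γ) (u : ℝ) (hu : u ≤ 1 - Γ⁻¹) :
    (-Real.log (1 - u) - u) / u ^ 2
      ≤ Γ ^ 2 * Real.log Γ / (Γ - 1) ^ 2 + Γ / (Γ - 1) := by
  have hΓ0 : 0 < Γ := one_pos.trans hΓ
  have hv : 1 - Γ⁻¹ < 1 := by simpa using hΓ0
  have hv0 : 1 - Γ⁻¹ ≠ 0 := sub_ne_zero.mpr (inv_ne_one.mpr hΓ.ne').symm
  have hB : 0 < Γ / (Γ - 1) := div_pos hΓ0 (sub_pos.mpr hΓ)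
  calc (-log (1 - u) - u) / u ^ 2
      ≤ (-log (1 - (1 - Γ⁻¹)) - (1 - Γ⁻¹)) / (1 - Γ⁻¹) ^ 2 :=
        neg_log_one_sub_sub_div_sq_mono hu hv hv0
    _ = Γ ^ 2 * log Γ / (Γ - 1) ^ 2 - Γ / (Γ - 1) :=
        neg_log_one_sub_sub_div_sq_one_sub_inv hΓ0.ne' hΓ.ne'
    _ ≤ Γ ^ 2 * log Γ / (Γ - 1) ^ 2 + Γ / (Γ - 1) := by linarith

/-- Elementary inequality: for all `Γ > 1` and all `u < 1` with `u ≤ 1 - Γ⁻¹`,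
`(-ln(1-u) - u)/u² ≤ Γ² ln Γ/(Γ-1)² + Γ/(Γ-1)`. -/
theorem neg_log_one_sub_div_sq_bound
    (Γ : ℝ) (hΓ : 1 < Γ) (u : ℝ) (hu1 : u < 1) (hu : u ≤ 1 - Γ⁻¹) :
    (-Real.log (1 - u) - u) / u ^ 2
      ≤ Γ ^ 2 * Real.log Γ / (Γ - 1) ^ 2 + Γ / (Γ - 1) :=
  neg_log_one_sub_div_sq_bound_general Γ hΓ u hu
end

section
/- For any t in a linear space S with orthonormal basis (ψ_λ) in L²(P_X), writing s_o − t = Σ_λ a_λ ψ_λ, for any probability measures and any ε > 0: (P_{B_K} − P)(γ(s_o) − γ(t)) ≤ (1/ε) Σ_λ [(P_{B_K} − P)((Y − s_o)ψ_λ)]² + ( ε + √( Σ_{λ,λ'} [(P_{B_K} − P)(ψ_λ ψ_{λ'})]² ) ) · ℓ(t, s_o). -/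
open scoped BigOperators

/-- Saumard-type deterministic bound (from the proof of Proposition 9): for any
linear functional `D` (playing the role of `P_{B_K} - P`), any coefficients
`a = (a_λ)` with `t = s_o - Σ_λ a_λ ψ_λ` and `ℓ(t, s_o) = Σ_λ a_λ²`, and any
`ε > 0`,
`D(γ(s_o) - γ(t)) ≤ ε⁻¹ Σ_λ (D((Y - s_o)ψ_λ))² +
  (ε + √(Σ_{λ,λ'} (D(ψ_λψ_{λ'}))²)) ℓ(t, s_o)`,
where `γ(u)(x,y) = (y - u(x))²`. -/
theorem saumard_linear_functional_bound
    {E Λ : Type*} [Fintype Λ]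
    (D : ((E × ℝ) → ℝ) →ₗ[ℝ] ℝ)
    (so : E → ℝ) (ψ : Λ → E → ℝ) (a : Λ → ℝ) (ε : ℝ) (hε : 0 < ε) :
    D (fun p => (p.2 - so p.1) ^ 2
          - (p.2 - (so p.1 - ∑ l, a l * ψ l p.1)) ^ 2)
      ≤ ε⁻¹ * ∑ l, (D (fun p => (p.2 - so p.1) * ψ l p.1)) ^ 2
        + (ε + Real.sqrt (∑ l, ∑ l', (D (fun p => ψ l p.1 * ψ l' p.1)) ^ 2))
            * ∑ l, (a l) ^ 2 := by
  set b : Λ → ℝ := fun l => D (fun p => (p.2 - so p.1) * ψ l p.1) with hb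
  set c : Λ → Λ → ℝ := fun l l' => D (fun p => ψ l p.1 * ψ l' p.1) with hc
  have key : (fun p : E × ℝ => (p.2 - so p.1) ^ 2
          - (p.2 - (so p.1 - ∑ l, a l * ψ l p.1)) ^ 2)
      = (∑ l, (-2 * a l) • (fun p : E × ℝ => (p.2 - so p.1) * ψ l p.1))
        + ∑ l, ∑ l', (-(a l * a l')) • (fun p : E × ℝ => ψ l p.1 * ψ l' p.1) := by
    funext p
    simp only [Finset.sum_apply, Pi.add_apply, Pi.smul_apply, smul_eq_mul]
    have e1 : ∑ l, (-2 * a l) * ((p.2 - so p.1) * ψ l p.1)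
        = -2 * (p.2 - so p.1) * ∑ l, a l * ψ l p.1 := by
      rw [Finset.mul_sum]
      exact Finset.sum_congr rfl fun l _ => by ring
    have e2 : ∑ l, ∑ l', (-(a l * a l')) * (ψ l p.1 * ψ l' p.1)
        = -((∑ l, a l * ψ l p.1) * (∑ l', a l' * ψ l' p.1)) := by
      rw [Finset.sum_mul_sum, ← Finset.sum_neg_distrib]
      refine Finset.sum_congr rfl fun l _ => ?_
      rw [← Finset.sum_neg_distrib]
      exact Finset.sum_congr rfl fun l' _ => by ring
    rw [e1, e2]
    ring
  have hD : D (fun p : E × ℝ => (p.2 - so p.1) ^ 2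
          - (p.2 - (so p.1 - ∑ l, a l * ψ l p.1)) ^ 2)
      = (∑ l, (-2 * a l) * b l) + ∑ l, ∑ l', (-(a l * a l')) * c l l' := by
    rw [key, map_add, map_sum]
    simp only [map_sum, map_smul, smul_eq_mul, hb, hc]
  rw [hD]
  have h1 : (∑ l, (-2 * a l) * b l) ≤ ε⁻¹ * ∑ l, b l ^ 2 + ε * ∑ l, a l ^ 2 := by
    rw [Finset.mul_sum, Finset.mul_sum, ← Finset.sum_add_distrib]
    refine Finset.sum_le_sum fun l _ => ?_
    have h := sq_nonneg (b l + ε * a l)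
    have hε' : 0 < ε⁻¹ := inv_pos.mpr hε
    nlinarith [mul_nonneg hε'.le h, mul_inv_cancel₀ hε.ne']
  have hA : (0:ℝ) ≤ ∑ l, a l ^ 2 := Finset.sum_nonneg fun _ _ => sq_nonneg _
  have h2 : (∑ l, ∑ l', (-(a l * a l')) * c l l')
      ≤ Real.sqrt (∑ l, ∑ l', c l l' ^ 2) * ∑ l, a l ^ 2 := by
    set S : ℝ := ∑ q : Λ × Λ, (-(a q.1 * a q.2)) * c q.1 q.2 with hS
    have cs := Finset.sum_mul_sq_le_sq_mul_sq Finset.univ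
      (fun q : Λ × Λ => -(a q.1 * a q.2)) (fun q : Λ × Λ => c q.1 q.2)
    have e2 : (∑ q : Λ × Λ, (-(a q.1 * a q.2)) ^ 2) = (∑ l, a l ^ 2) ^ 2 := by
      rw [Fintype.sum_prod_type, sq, Finset.sum_mul_sum]
      exact Finset.sum_congr rfl fun l _ => Finset.sum_congr rfl fun l' _ => by ring
    have e3 : (∑ q : Λ × Λ, c q.1 q.2 ^ 2) = ∑ l, ∑ l', c l l' ^ 2 := by
      rw [Fintype.sum_prod_type]
    rw [e2, e3, ← hS] at cs
    calc (∑ l, ∑ l', (-(a l * a l')) * c l l') = S := by rw [hS, Fintype.sum_prod_type]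
      _ ≤ |S| := le_abs_self _
      _ = Real.sqrt (S ^ 2) := (Real.sqrt_sq_eq_abs _).symm
      _ ≤ Real.sqrt ((∑ l, a l ^ 2) ^ 2 * ∑ l, ∑ l', c l l' ^ 2) := Real.sqrt_le_sqrt cs
      _ = Real.sqrt (∑ l, ∑ l', c l l' ^ 2) * ∑ l, a l ^ 2 := by
          rw [Real.sqrt_mul (sq_nonneg _), Real.sqrt_sq hA]; ring
  nlinarith [h1, h2]
end

section
/- Let X_1,...,X_n be i.i.d., let B_1,...,B_V be a regular partition with V ≥ ⌈ln(δ^{-2})⌉, let r = (1 − √(1 − e^{-2}))/2, and suppose there are independent events Ω_1,...,Ω_V with E[ℓ(ŝ_K, s_o) 1_{Ω_K}] ≤ E and P(Ω_K^c) ≤ r for all K. Then P( min_{K=1,...,V} ℓ(ŝ_K, s_o) > 4e² E ) ≤ 2 e^{-V}. -/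
open MeasureTheory ProbabilityTheory
open scoped ENNReal

/-! On `{min_K ℓ(ŝ_K, s_o) > 4e²E}` every block `K` lies in the event
`Ω_Kᶜ ∪ {ℓ(ŝ_K, s_o) > 4e²E}`. These events are generated by disjoint blocks of independent
coordinates, hence independent, and by Markov's inequality on `Ω_K` each has probability at most
`r + 1/(4e²) ≤ e⁻¹`. Hence the probability is at most `e^{-V}`. -/

theorem ProbabilityTheory.iIndep.iIndep_biSup_of_pairwise_disjoint {Ω ι κ : Type*}
    {m : ι → MeasurableSpace Ω} {mΩ : MeasurableSpace Ω} {μ : Measure Ω}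
    (h_le : ∀ i, m i ≤ mΩ) (h : iIndep m μ) {B : κ → Set ι}
    (hB : Pairwise (Function.onFun Disjoint B)) :
    iIndep (fun K ↦ ⨆ i ∈ B K, m i) μ := by
  classical
  refine (iIndep_iff _ μ).2 fun s ↦ ?_
  induction s using Finset.induction_on with
  | empty => intro f _; simpa using (iIndep_iff _ μ).1 h ∅ (f := fun _ ↦ Set.univ) (by simp)
  | insert a s ha ih =>
    intro f hf
    have hdisj : Disjoint (B a) (⋃ K ∈ s, B K) :=
      Set.disjoint_iUnion₂_right.2 fun K hK ↦ hB (ne_of_mem_of_not_mem hK ha).symm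
    have hrest : MeasurableSet[⨆ i ∈ ⋃ K ∈ s, B K, m i] (⋂ K ∈ s, f K) :=
      @Finset.measurableSet_biInter _ _ (⨆ i ∈ ⋃ K ∈ s, B K, m i) _ s fun K hK ↦ by
        have hle : ⨆ i ∈ B K, m i ≤ ⨆ i ∈ ⋃ K ∈ s, B K, m i :=
          biSup_mono fun i hi ↦ Set.mem_biUnion hK hi
        exact hle _ (hf K (Finset.mem_insert_of_mem hK))
    rw [Finset.set_biInter_insert, Finset.prod_insert ha,
      ← ih fun K hK ↦ hf K (Finset.mem_insert_of_mem hK)]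
    exact (Indep_iff _ _ μ).1 (indep_iSup_of_disjoint h_le h hdisj) _ _
      (hf a (Finset.mem_insert_self a s)) hrest

theorem measurableSet_biSup_comap_preimage {Ω ι E : Type*} [mE : MeasurableSpace E]
    {X : ι → Ω → E} {s : Set ι} {T : Set (ι → E)} (hT : MeasurableSet T)
    (hTs : DependsOn (· ∈ T) s) :
    MeasurableSet[⨆ i ∈ s, mE.comap (X i)] ((fun ω i ↦ X i ω) ⁻¹' T) := by
  classical
  rcases isEmpty_or_nonempty Ω with hΩ | ⟨⟨ω₀⟩⟩
  · rw [Set.eq_empty_of_isEmpty ((fun ω i ↦ X i ω) ⁻¹' T)]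
    exact @MeasurableSet.empty _ (⨆ i ∈ s, mE.comap (X i))
  -- coordinates outside `s` are frozen at `ω₀`, which does not change membership in `T`
  let Z : Ω → ι → E := fun ω i ↦ if i ∈ s then X i ω else X i ω₀
  have hZ : Measurable[⨆ i ∈ s, mE.comap (X i)] Z := by
    refine @measurable_pi_lambda _ _ _ (⨆ i ∈ s, mE.comap (X i)) _ _ fun i ↦ ?_
    by_cases hi : i ∈ s
    · simp only [Z, hi, if_true]
      exact measurable_iff_comap_le.2
        (le_iSup₂ (f := fun i (_ : i ∈ s) ↦ mE.comap (X i)) i hi)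
    · simp only [Z, hi, if_false]
      exact measurable_const
  convert hZ hT using 1
  ext ω
  exact Iff.of_eq (hTs fun i hi ↦ by simp [Z, hi])

theorem measure_mul_lt_le_inv_of_integral_le {Ω : Type*} {mΩ : MeasurableSpace Ω}
    {ν : Measure Ω} {f : Ω → ℝ} (hf : 0 ≤ᵐ[ν] f) (hfi : Integrable f ν) {E x : ℝ}
    (hx : 0 < x) (hE : ∫ ω, f ω ∂ν ≤ E) :
    ν {ω | x * E < f ω} ≤ ENNReal.ofReal x⁻¹ := by
  have hint_nonneg : 0 ≤ ∫ ω, f ω ∂ν := integral_nonneg_of_ae hf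
  rcases (hint_nonneg.trans hE).eq_or_lt with rfl | hE_pos
  · have hf_zero : f =ᵐ[ν] 0 :=
      (integral_eq_zero_iff_of_nonneg_ae hf hfi).1 (le_antisymm hE hint_nonneg)
    refine (measure_mono_null (fun ω hω ↦ ?_) (ae_iff.1 hf_zero)).trans_le zero_le
    simp only [mul_zero, Set.mem_ofPred_eq] at hω
    exact hω.ne'
  have hfin : ν {ω | x * E ≤ f ω} ≠ ∞ := (hfi.measure_ge_lt_top (by positivity)).ne
  have hmarkov : x * E * ν.real {ω | x * E ≤ f ω} ≤ E :=
    (mul_meas_ge_le_integral_of_nonneg hf hfi _).trans hE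
  calc ν {ω | x * E < f ω} ≤ ν {ω | x * E ≤ f ω} :=
        measure_mono fun ω (hω : x * E < f ω) ↦ hω.le
    _ = ENNReal.ofReal (ν.real {ω | x * E ≤ f ω}) := (ENNReal.ofReal_toReal hfin).symm
    _ ≤ ENNReal.ofReal x⁻¹ := by
      refine ENNReal.ofReal_le_ofReal ?_
      rw [← one_div, le_div_iff₀ hx]
      nlinarith

theorem measure_compl_union_setOf_mul_lt_le {Ω : Type*} {mΩ : MeasurableSpace Ω}
    {μ : Measure Ω} {s : Set Ω} (hs : MeasurableSet s) {f : Ω → ℝ} (hf : ∀ ω, 0 ≤ f ω)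
    (hfi : Integrable f μ) {E x : ℝ} (hx : 0 < x) (hE : ∫ ω in s, f ω ∂μ ≤ E) :
    μ (sᶜ ∪ {ω | x * E < f ω}) ≤ μ sᶜ + ENNReal.ofReal x⁻¹ := by
  calc μ (sᶜ ∪ {ω | x * E < f ω}) = μ (sᶜ ∪ {ω | x * E < f ω} ∩ s) := by
        congr 1; ext ω; by_cases hω : ω ∈ s <;> simp [hω]
    _ ≤ μ sᶜ + μ.restrict s {ω | x * E < f ω} := by
        rw [Measure.restrict_apply' hs]; exact measure_union_le _ _
    _ ≤ μ sᶜ + ENNReal.ofReal x⁻¹ := by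
        gcongr
        exact measure_mul_lt_le_inv_of_integral_le (ae_of_all _ hf) hfi.restrict hx hE

theorem block_failure_bound_le_exp_neg_one :
    ENNReal.ofReal ((1 - Real.sqrt (1 - Real.exp (-2))) / 2) +
      ENNReal.ofReal (4 * Real.exp 1 ^ 2)⁻¹ ≤ ENNReal.ofReal (Real.exp (-1)) := by
  set a := Real.exp (-1) with ha
  have ha_pos : 0 < a := Real.exp_pos _
  have ha_lt : a < 1 := Real.exp_lt_one_iff.2 (by norm_num)
  have hexp2 : Real.exp (-2) = a ^ 2 := by rw [ha, ← Real.exp_nat_mul]; norm_num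
  have hexp1 : (4 * Real.exp 1 ^ 2)⁻¹ = a ^ 2 / 4 := by
    rw [ha, Real.exp_neg]; field_simp
  have hb : 0 ≤ 1 - a ^ 2 := by nlinarith
  -- `√(1 - a²) ≥ 1 - a²`, so the first summand is at most `a² / 2`
  have hsqrt : 1 - a ^ 2 ≤ Real.sqrt (1 - a ^ 2) :=
    Real.le_sqrt_of_sq_le (by nlinarith [mul_nonneg hb (sq_nonneg a)])
  have hsqrt_le : Real.sqrt (1 - a ^ 2) ≤ 1 := Real.sqrt_le_one.2 (by linarith [sq_nonneg a])
  rw [hexp2, hexp1, ← ENNReal.ofReal_add (by linarith) (by positivity)]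
  exact ENNReal.ofReal_le_ofReal (by nlinarith)

theorem min_block_loss_good_events_bound_general
    {Ω E : Type*} [MeasurableSpace Ω] [MeasurableSpace E]
    (μ : Measure Ω)
    (n : ℕ)
    (V : ℕ)
    (X : Fin n → Ω → E) (hXmeas : ∀ i, Measurable (X i))
    (hindep : iIndepFun X μ)
    (B : Fin V → Finset (Fin n))
    (hdisj : Pairwise (fun K K' => Disjoint (B K) (B K')))
    (G : Fin V → (Fin n → E) → ℝ) (hGmeas : ∀ K, Measurable (G K))
    (hGnonneg : ∀ K v, 0 ≤ G K v)
    (hGint : ∀ K, Integrable (fun ω => G K (fun i => X i ω)) μ)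
    (hGlocal : ∀ K v w, (∀ i ∈ B K, v i = w i) → G K v = G K w)
    (S : Fin V → Set (Fin n → E)) (hSmeas : ∀ K, MeasurableSet (S K))
    (hSlocal : ∀ K v w, (∀ i ∈ B K, v i = w i) → (v ∈ S K ↔ w ∈ S K))
    (Ebound : ℝ)
    (hmean : ∀ K, ∫ ω in {ω | (fun i => X i ω) ∈ S K}, G K (fun i => X i ω) ∂μ
        ≤ Ebound)
    (hbad : ∀ K, μ {ω | (fun i => X i ω) ∉ S K}
        ≤ ENNReal.ofReal ((1 - Real.sqrt (1 - Real.exp (-2))) / 2)) :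
    μ {ω | ∀ K, 4 * Real.exp 1 ^ 2 * Ebound < G K (fun i => X i ω)}
      ≤ ENNReal.ofReal (2 * Real.exp (-(V : ℝ))) := by
  set c := 4 * Real.exp 1 ^ 2 * Ebound
  let A : Fin V → Set Ω := fun K ↦ (fun ω i ↦ X i ω) ⁻¹' ((S K)ᶜ ∪ {v | c < G K v})
  have hA_meas (K : Fin V) :
      MeasurableSet[⨆ i ∈ (B K : Set (Fin n)), MeasurableSpace.comap (X i) ‹_›] (A K) :=
    measurableSet_biSup_comap_preimage
      ((hSmeas K).compl.union (measurableSet_lt measurable_const (hGmeas K))) fun v w h ↦ by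
        simp only [Set.mem_union, Set.mem_compl_iff, Set.mem_ofPred_eq, hGlocal K v w h,
          hSlocal K v w h]
  have hA_indep :
      iIndep (fun K ↦ ⨆ i ∈ (B K : Set (Fin n)), MeasurableSpace.comap (X i) ‹_›) μ :=
    hindep.iIndep.iIndep_biSup_of_pairwise_disjoint (fun i ↦ (hXmeas i).comap_le)
      fun K K' h ↦ Finset.disjoint_coe.2 (hdisj h)
  have hA_le (K : Fin V) : μ (A K) ≤ ENNReal.ofReal (Real.exp (-1)) :=
    calc μ (A K)
        ≤ μ {ω | (fun i ↦ X i ω) ∈ S K}ᶜ + ENNReal.ofReal (4 * Real.exp 1 ^ 2)⁻¹ :=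
          measure_compl_union_setOf_mul_lt_le (measurable_pi_lambda _ hXmeas (hSmeas K))
            (fun ω ↦ hGnonneg K _) (hGint K) (by positivity) (hmean K)
      _ ≤ _ := (add_le_add_left (hbad K) _).trans block_failure_bound_le_exp_neg_one
  calc μ {ω | ∀ K, c < G K (fun i ↦ X i ω)}
      ≤ μ (⋂ K, A K) := measure_mono fun ω hω ↦ Set.mem_iInter.2 fun K ↦ Or.inr (hω K)
    _ = ∏ K, μ (A K) := hA_indep.meas_iInter hA_meas
    _ ≤ ∏ _K : Fin V, ENNReal.ofReal (Real.exp (-1)) := Finset.prod_le_prod' fun K _ ↦ hA_le K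
    _ = ENNReal.ofReal (Real.exp (-(V : ℝ))) := by
      rw [Finset.prod_const, Finset.card_univ, Fintype.card_fin,
        ← ENNReal.ofReal_pow (Real.exp_nonneg _), ← Real.exp_nat_mul, mul_neg_one]
    _ ≤ ENNReal.ofReal (2 * Real.exp (-(V : ℝ))) :=
      ENNReal.ofReal_le_ofReal (by linarith [Real.exp_pos (-(V : ℝ))])

/-- Lemma 7 (control of the minimum via good events): with a regular partition
into `V ≥ ⌈ln(δ⁻²)⌉` blocks of an i.i.d. sample, block-wise nonnegative losses
`ℓ(ŝ_K, s_o) = G K (X ·)` and block-wise events `Ω_K = {X · ∈ S K}` (both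
depending only on the coordinates in `B K`), if
`E[ℓ(ŝ_K, s_o) 1_{Ω_K}] ≤ E` and `P(Ω_K^c) ≤ r = (1 - √(1 - e⁻²))/2` for all `K`,
then `P(min_K ℓ(ŝ_K, s_o) > 4e² E) ≤ 2 e^{-V}`. -/
theorem min_block_loss_good_events_bound
    {Ω E : Type*} [MeasurableSpace Ω] [MeasurableSpace E]
    (μ : Measure Ω) [IsProbabilityMeasure μ]
    (n : ℕ) (hn : 0 < n)
    (δ : ℝ) (hδ : 0 < δ)
    (V : ℕ) (hV : ⌈Real.log (δ ^ (-2 : ℤ))⌉₊ ≤ V) (hVpos : 0 < V)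
    (X : Fin n → Ω → E) (hXmeas : ∀ i, Measurable (X i))
    (hindep : iIndepFun X μ)
    (P : Measure E) (hid : ∀ i, Measure.map (X i) μ = P)
    (B : Fin V → Finset (Fin n))
    (hdisj : Pairwise (fun K K' => Disjoint (B K) (B K')))
    (hcover : Finset.univ.biUnion B = Finset.univ)
    (hreg : ∀ K, |((B K).card : ℝ) - (n : ℝ) / V| ≤ 1)
    (G : Fin V → (Fin n → E) → ℝ) (hGmeas : ∀ K, Measurable (G K))
    (hGnonneg : ∀ K v, 0 ≤ G K v)
    (hGint : ∀ K, Integrable (fun ω => G K (fun i => X i ω)) μ)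
    (hGlocal : ∀ K v w, (∀ i ∈ B K, v i = w i) → G K v = G K w)
    (S : Fin V → Set (Fin n → E)) (hSmeas : ∀ K, MeasurableSet (S K))
    (hSlocal : ∀ K v w, (∀ i ∈ B K, v i = w i) → (v ∈ S K ↔ w ∈ S K))
    (Ebound : ℝ)
    (hmean : ∀ K, ∫ ω in {ω | (fun i => X i ω) ∈ S K}, G K (fun i => X i ω) ∂μ
        ≤ Ebound)
    (hbad : ∀ K, μ {ω | (fun i => X i ω) ∉ S K}
        ≤ ENNReal.ofReal ((1 - Real.sqrt (1 - Real.exp (-2))) / 2)) :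
    μ {ω | ∀ K, 4 * Real.exp 1 ^ 2 * Ebound < G K (fun i => X i ω)}
      ≤ ENNReal.ofReal (2 * Real.exp (-(V : ℝ))) :=
  min_block_loss_good_events_bound_general μ n V X hXmeas hindep B hdisj G hGmeas hGnonneg hGint
    hGlocal S hSmeas hSlocal Ebound hmean hbad
end
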